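/- arXiv:2508.08153 — 3 statements merged into one kernel-verified Lean document; each statement's English description precedes it below -/
import Mathlib

section
/- Let α : ℝ → ℝ be continuous, strictly increasing, with α(0) = 0. Suppose (V_t) is a sequence of nonnegative reals such that whenever V_t > 0 we have V_{t+1} − V_t ≤ α(−V_t), and whenever V_t = 0 we have V_{t+1} = 0. Then lim_{t→∞} V_t = 0. -/
/-- the energy sequence converges to zero. -/
theorem stmt_2 (α : ℝ → ℝ) (hcont : Continuous α) (hmono : StrictMono α)
    (h0 : α 0 = 0) (V : ℕ → ℝ) (hVnn : ∀ t, 0 ≤ V t)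
    (hdec : ∀ t, 0 < V t → V (t + 1) - V t ≤ α (-V t))
    (hzero : ∀ t, V t = 0 → V (t + 1) = 0) :
    Filter.Tendsto V Filter.atTop (nhds 0) := by
  have hanti : Antitone V := by
    apply antitone_nat_of_succ_le
    intro t
    rcases eq_or_lt_of_le (hVnn t) with h | h
    · rw [hzero t h.symm, ← h]
    · have := hdec t h
      have hneg : α (-V t) < 0 := by
        have := hmono (show -V t < 0 by linarith)
        rwa [h0] at this
      linarith
  have hbdd : BddBelow (Set.range V) := ⟨0, by rintro x ⟨t, rfl⟩; exact hVnn t⟩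
  have htend := tendsto_atTop_ciInf hanti hbdd
  set L := ⨅ t, V t with hL
  have hLle : ∀ t, L ≤ V t := fun t => ciInf_le hbdd t
  have hLnn : 0 ≤ L := le_ciInf hVnn
  rcases eq_or_lt_of_le hLnn with h | h
  · rwa [← h] at htend
  · exfalso
    have hpos : ∀ t, 0 < V t := fun t => lt_of_lt_of_le h (hLle t)
    have h1 : Filter.Tendsto (fun t => V (t + 1)) Filter.atTop (nhds L) :=
      htend.comp (Filter.tendsto_add_atTop_nat 1)
    have h2 : Filter.Tendsto (fun t => V t + α (-V t)) Filter.atTop (nhds (L + α (-L))) :=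
      htend.add ((hcont.tendsto _).comp htend.neg)
    have hle : L ≤ L + α (-L) :=
      le_of_tendsto_of_tendsto' h1 h2 (fun t => by linarith [hdec t (hpos t)])
    have : α (-L) < 0 := by
      have := hmono (show -L < 0 by linarith)
      rwa [h0] at this
    linarith
end

section
/- Let α : ℝ → ℝ be continuous, strictly increasing with α(0)=0 and lim_{r→∞}α(r) = ∞, and suppose (B_t) satisfies B_{t+1} ≥ B_t − α(B_t) for all t and (B_t) is bounded above. If B_0 < 0, then lim_{t→∞} min(B_t, 0) = 0, i.e., the negative part of B_t converges to zero. -/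
/-- the negative part of the barrier value converges to zero
(inherent robustness at the sequence level). -/
theorem stmt_16 (α : ℝ → ℝ) (hcont : Continuous α) (hmono : StrictMono α)
    (h0 : α 0 = 0) (htop : Filter.Tendsto α Filter.atTop Filter.atTop)
    (hsub : ∀ r : ℝ, 0 < r → α r < r)
    (B : ℕ → ℝ) (hstep : ∀ t, B (t + 1) ≥ B t - α (B t))
    (hbdd : ∃ M, ∀ t, B t ≤ M) (hB0 : B 0 < 0) :
    Filter.Tendsto (fun t => min (B t) 0) Filter.atTop (nhds 0) := by
  set f : ℕ → ℝ := fun t => min (B t) 0 with hf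
  -- f is nondecreasing
  have hstep' : ∀ t, f t ≤ f (t + 1) := by
    intro t
    by_cases hb : B t < 0
    · have hα : α (B t) < 0 := by
        have := hmono hb
        rwa [h0] at this
      have : B t ≤ B (t + 1) := by
        have := hstep t; linarith
      exact min_le_min this le_rfl
    · push_neg at hb
      have hαle : α (B t) ≤ B t := by
        rcases eq_or_lt_of_le hb with h | h
        · simp [← h, h0]
        · exact (hsub _ h).le
      have h1 : 0 ≤ B (t + 1) := by have := hstep t; linarith
      simp [hf, min_eq_right hb, min_eq_right h1]
  have hfmono : Monotone f := monotone_nat_of_le_succ hstep'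
  have hfbdd : BddAbove (Set.range f) := by
    refine ⟨0, ?_⟩
    rintro x ⟨t, rfl⟩
    exact min_le_right _ _
  have htend : Filter.Tendsto f Filter.atTop (nhds (⨆ t, f t)) :=
    tendsto_atTop_ciSup hfmono hfbdd
  set L := ⨆ t, f t with hL
  have hLle : L ≤ 0 := ciSup_le fun t => min_le_right _ _
  have hLeq : L = 0 := by
    by_contra hne
    have hLlt : L < 0 := lt_of_le_of_ne hLle hne
    have hBle : ∀ t, B t ≤ L := by
      intro t
      have hft : f t ≤ L := le_ciSup hfbdd t
      by_contra hc
      push_neg at hc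
      have : L < f t := lt_min hc hLlt
      linarith
    have hαL : α L < 0 := by
      have := hmono hLlt
      rwa [h0] at this
    have hgrow : ∀ t, B 0 + t * (-α L) ≤ B t := by
      intro t
      induction t with
      | zero => simp
      | succ n ih =>
        have h1 : α (B n) ≤ α L := (hmono.le_iff_le).mpr (hBle n)
        have h2 := hstep n
        push_cast
        nlinarith
    obtain ⟨t, ht⟩ := exists_nat_gt ((L - B 0) / (-α L))
    have hpos : (0:ℝ) < -α L := by linarith
    have : L - B 0 < t * (-α L) := by
      rw [div_lt_iff₀ hpos] at ht
      linarith
    have := hgrow t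
    have := hBle t
    linarith
  rw [hLeq] at htend
  exact htend
end

section
/- Suppose B is L_B-Lipschitz on X, and at state x with input u the certificate B(f(x,u;θ̂_t)) − B(x) − L_B·w̄ − (L_B‖φ(x)‖ + ‖δ_t‖/λ)·β_t − ‖δ_t‖²/(2λ) ≥ −α(B(x) − β_t²/(2λ)) holds, where δ_t = θ̂_{t+1} − θ̂_t, ‖θ̂_t − θ*‖ ≤ β_t, ‖θ̂_{t+1} − θ*‖ ≤ β_{t+1}, λ = λ_min(Γ) > 0, and the true next state is x⁺ = f(x,u;θ*) + w with ‖w‖ ≤ w̄. Then, with B̃_t(x) = B(x) − (1/2)(θ̂_t − θ*)ᵀΓ⁻¹(θ̂_t − θ*) and B̃_{t+1} defined analogously, one has B̃_{t+1}(x⁺) − B̃_t(x) ≥ −α(B̃_t(x)) whenever α is nondecreasing. -/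
open Matrix

/-- View a plain vector as an element of Euclidean space (definitionally equal types). -/
def toE {k : ℕ} (v : Fin k → ℝ) : EuclideanSpace ℝ (Fin k) := WithLp.toLp 2 v

/-- View an element of Euclidean space as a plain vector. -/
def ofE {k : ℕ} (v : EuclideanSpace ℝ (Fin k)) : Fin k → ℝ := v

/-- single-step decrease condition for the tightened barrier
`B̃_t(x) = B(x) − (1/2) ε_tᵀ Γ⁻¹ ε_t` from the robust adaptive control barrier
certificate.  Here `f(x,u;θ) = c − φᵀθ` with `c = f_d(x) + g(x)u`, `nφ` bounds the
spectral norm of `φ = φ(x)`, `λ = λ_min(Γ) > 0` (so that the bilinear form of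
`Γ⁻¹` is bounded by `‖u‖‖v‖/λ` and is nonnegative on the diagonal), the true next
state is `x⁺ = f(x,u;θ*) + w` with `‖w‖ ≤ w̄`, `δ = θ̂_{t+1} − θ̂_t`, and
`‖θ̂_t − θ*‖ ≤ β_t`. -/
theorem stmt_17 {n qd : ℕ} (B : EuclideanSpace ℝ (Fin n) → ℝ) (LB : ℝ) (hLB : 0 ≤ LB)
    (hLip : ∀ a b : EuclideanSpace ℝ (Fin n), |B a - B b| ≤ LB * ‖a - b‖)
    (Γ : Matrix (Fin qd) (Fin qd) ℝ) (hΓ : Γ.PosDef) (lam : ℝ) (hlam : 0 < lam)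
    (hbil : ∀ u v : EuclideanSpace ℝ (Fin qd),
      (ofE u) ⬝ᵥ (Γ⁻¹ *ᵥ ofE v) ≤ ‖u‖ * ‖v‖ / lam)
    (hdiag : ∀ v : EuclideanSpace ℝ (Fin qd), 0 ≤ (ofE v) ⬝ᵥ (Γ⁻¹ *ᵥ ofE v))
    (φ : Matrix (Fin qd) (Fin n) ℝ) (nφ : ℝ) (hnφnn : 0 ≤ nφ)
    (hnφ : ∀ v : EuclideanSpace ℝ (Fin qd), ‖toE (φᵀ *ᵥ ofE v)‖ ≤ nφ * ‖v‖)
    (c : EuclideanSpace ℝ (Fin n))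
    (f : EuclideanSpace ℝ (Fin qd) → EuclideanSpace ℝ (Fin n))
    (hf : ∀ θ, f θ = c - toE (φᵀ *ᵥ ofE θ))
    (θstar θhatt θhatt1 : EuclideanSpace ℝ (Fin qd))
    (δ : EuclideanSpace ℝ (Fin qd)) (hδ : δ = θhatt1 - θhatt)
    (εt εt1 : EuclideanSpace ℝ (Fin qd)) (hεt : εt = θhatt - θstar)
    (hεt1 : εt1 = θhatt1 - θstar)
    (βt βt1 : ℝ) (hβt : ‖εt‖ ≤ βt) (hβt1 : ‖εt1‖ ≤ βt1)
    (w xplus : EuclideanSpace ℝ (Fin n)) (wbar : ℝ) (hw : ‖w‖ ≤ wbar)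
    (hxplus : xplus = f θstar + w)
    (α : ℝ → ℝ) (hα : Monotone α) (x : EuclideanSpace ℝ (Fin n))
    (hcert : B (f θhatt) - B x - LB * wbar
        - (LB * nφ + ‖δ‖ / lam) * βt - ‖δ‖ ^ 2 / (2 * lam)
        ≥ -α (B x - βt ^ 2 / (2 * lam))) :
    (B xplus - (1 / 2) * ((ofE εt1) ⬝ᵥ (Γ⁻¹ *ᵥ ofE εt1)))
        - (B x - (1 / 2) * ((ofE εt) ⬝ᵥ (Γ⁻¹ *ᵥ ofE εt)))
      ≥ -α (B x - (1 / 2) * ((ofE εt) ⬝ᵥ (Γ⁻¹ *ᵥ ofE εt))) := by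
  have hεsum : εt1 = εt + δ := by rw [hεt1, hεt, hδ]; abel
  -- quadratic form expansion
  have hofE : ofE εt1 = ofE εt + ofE δ := by rw [hεsum]; rfl
  have hexp : (ofE εt1) ⬝ᵥ (Γ⁻¹ *ᵥ ofE εt1)
      = (ofE εt) ⬝ᵥ (Γ⁻¹ *ᵥ ofE εt) + (ofE εt) ⬝ᵥ (Γ⁻¹ *ᵥ ofE δ)
        + (ofE δ) ⬝ᵥ (Γ⁻¹ *ᵥ ofE εt) + (ofE δ) ⬝ᵥ (Γ⁻¹ *ᵥ ofE δ) := by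
    rw [hofE, Matrix.mulVec_add, add_dotProduct, dotProduct_add,
      dotProduct_add]
    ring
  have hδnn : (0:ℝ) ≤ ‖δ‖ := norm_nonneg _
  have hβtnn : (0:ℝ) ≤ βt := le_trans (norm_nonneg _) hβt
  have h1 : (ofE εt) ⬝ᵥ (Γ⁻¹ *ᵥ ofE δ) ≤ βt * ‖δ‖ / lam := by
    refine le_trans (hbil εt δ) ?_
    apply div_le_div_of_nonneg_right ?_ hlam.le
    exact mul_le_mul_of_nonneg_right hβt hδnn
  have h2 : (ofE δ) ⬝ᵥ (Γ⁻¹ *ᵥ ofE εt) ≤ βt * ‖δ‖ / lam := by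
    refine le_trans (hbil δ εt) ?_
    apply div_le_div_of_nonneg_right ?_ hlam.le
    rw [mul_comm]
    exact mul_le_mul_of_nonneg_right hβt hδnn
  have h3 : (ofE δ) ⬝ᵥ (Γ⁻¹ *ᵥ ofE δ) ≤ ‖δ‖ ^ 2 / lam := by
    refine le_trans (hbil δ δ) ?_
    rw [sq]
  have h4 : (ofE εt) ⬝ᵥ (Γ⁻¹ *ᵥ ofE εt) ≤ βt ^ 2 / lam := by
    refine le_trans (hbil εt εt) ?_
    apply div_le_div_of_nonneg_right ?_ hlam.le
    rw [sq]
    exact mul_le_mul hβt hβt (norm_nonneg _) hβtnn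
  have h5 := hdiag εt
  -- Lipschitz step
  have hdiff : xplus - f θhatt = toE (φᵀ *ᵥ ofE εt) + w := by
    rw [hxplus, hf, hf, hεt]
    have : ofE (θhatt - θstar) = ofE θhatt - ofE θstar := rfl
    rw [this, Matrix.mulVec_sub]
    simp only [toE, ofE, WithLp.toLp_sub]
    module
  have hnorm : ‖xplus - f θhatt‖ ≤ nφ * βt + wbar := by
    rw [hdiff]
    refine le_trans (norm_add_le _ _) ?_
    have := hnφ εt
    have h6 : nφ * ‖εt‖ ≤ nφ * βt := mul_le_mul_of_nonneg_left hβt hnφnn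
    linarith
  have hLipb : B (f θhatt) - B xplus ≤ LB * (nφ * βt + wbar) := by
    have := hLip (f θhatt) xplus
    have h7 : |B (f θhatt) - B xplus| ≤ LB * (nφ * βt + wbar) := by
      refine le_trans this ?_
      rw [norm_sub_rev]
      exact mul_le_mul_of_nonneg_left hnorm hLB
    exact le_trans (le_abs_self _) h7
  -- monotone step
  have hmono : α (B x - βt ^ 2 / (2 * lam)) ≤ α (B x - (1 / 2) * ((ofE εt) ⬝ᵥ (Γ⁻¹ *ᵥ ofE εt))) := by
    apply hα
    have : (1 / 2) * ((ofE εt) ⬝ᵥ (Γ⁻¹ *ᵥ ofE εt)) ≤ βt ^ 2 / (2 * lam) := by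
      rw [div_mul_eq_div_div_swap]
      linarith
    linarith
  rw [hexp]
  have hd2 : ‖δ‖ ^ 2 / (2 * lam) = (‖δ‖ ^ 2 / lam) / 2 := by
    rw [div_mul_eq_div_div_swap]
  have e1 : (LB * nφ + ‖δ‖ / lam) * βt = LB * nφ * βt + βt * ‖δ‖ / lam := by ring
  rw [e1, hd2] at hcert
  have e2 : LB * (nφ * βt + wbar) = LB * nφ * βt + LB * wbar := by ring
  rw [e2] at hLipb
  linarith
end
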